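/- Let d ≥ 1 be an integer, s > 0 and p ≥ 1 be real numbers with s > 2p. Let (ξ_z)_{z∈Z^d∖{0}} be independent random variables on a probability space (Ω, 𝓕, ℙ) such that ℙ(ξ_z = 1) = |z|^{−(d+s)} and ℙ(ξ_z = 0) = 1 − |z|^{−(d+s)} for every z ≠ 0, where |·| denotes the Euclidean norm. Then the random variable Σ_{z∈Z^d∖{0}} |z|² ξ_z has finite p-th moment: E[ ( Σ_{z≠0} |z|² ξ_z )^p ] < ∞. -/

import Mathlib

set_option maxHeartbeats 1000000


open scoped BigOperators ENNReal Classical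
open MeasureTheory

noncomputable section

abbrev Zd (d : ℕ) := Fin d → ℤ

/-- Euclidean norm of a lattice point. -/
def znorm {d : ℕ} (x : Zd d) : ℝ := Real.sqrt (∑ i, ((x i : ℝ)) ^ 2)

/-- The ball `B_R = {z : |z| ≤ R}` as a finite set. -/
def zball (d : ℕ) (R : ℝ) : Finset (Zd d) :=
  (Finset.Icc (fun _ => (-⌈R⌉ : ℤ)) fun _ => (⌈R⌉ : ℤ)).filter fun z => znorm z ≤ R

/-- A conductance: symmetric, nonnegative, vanishing on the diagonal. -/
def IsConductance {d : ℕ} (C : Zd d → Zd d → ℝ) : Prop :=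
  (∀ x y, 0 ≤ C x y) ∧ (∀ x y, C x y = C y x) ∧ ∀ x, C x x = 0

def muC {d : ℕ} (C : Zd d → Zd d → ℝ) (x : Zd d) : ℝ :=
  ∑' z : Zd d, znorm z ^ 2 * C x (x + z)

def muM {d : ℕ} (C : Zd d → Zd d → ℝ) (m : ℝ) (x : Zd d) : ℝ :=
  ∑' z : Zd d, znorm z ^ m * C x (x + z)

def nuC {d : ℕ} (C : Zd d → Zd d → ℝ) (x : Zd d) : ℝ :=
  ∑ z ∈ (zball d 1).filter (fun z => znorm z = 1), (C x (x + z))⁻¹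

/-- normalized ℓ^p norm over a finite set, `p` finite. -/
def pnorm {d : ℕ} (p : ℝ) (A : Finset (Zd d)) (f : Zd d → ℝ) : ℝ :=
  ((A.card : ℝ)⁻¹ * ∑ x ∈ A, |f x| ^ p) ^ (1 / p)

/-- normalized ℓ^p norm over a finite set, allowing `p = ∞`. -/
def pnormE {d : ℕ} (p : ℝ≥0∞) (A : Finset (Zd d)) (f : Zd d → ℝ) : ℝ :=
  if p = ∞ then sSup ((fun x => |f x|) '' (A : Set (Zd d))) else pnorm p.toReal A f

/-- real value of `1/p` for `p ∈ (1,∞]` (gives `0` at `p = ∞`). -/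
def rinv (p : ℝ≥0∞) : ℝ := p⁻¹.toReal

/-- conjugate exponent `p_* = p/(p-1)`, with `p_* = 1` when `p = ∞`. -/
def pconj (p : ℝ≥0∞) : ℝ := if p = ∞ then 1 else p.toReal / (p.toReal - 1)

/-- tail of `v` at scale `R`. -/
def tailT {d : ℕ} (C : Zd d → Zd d → ℝ) (v : Zd d → ℝ) (R : ℝ) (x : Zd d) : ℝ :=
  R ^ 2 * ∑' y : Zd d, if R < znorm y then v y * C x y else 0

/-- caloric on `[a,b] × B_R`: `∂ₜ u = ℒu`, all sums converging (absolutely). -/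
def Caloric {d : ℕ} (C : Zd d → Zd d → ℝ) (u : ℝ → Zd d → ℝ) (a b R : ℝ) : Prop :=
  ∀ t ∈ Set.Icc a b, ∀ x ∈ zball d R,
    Summable (fun y : Zd d => (u t y - u t x) * C x y) ∧
    HasDerivAt (fun s => u s x) (∑' y : Zd d, (u t y - u t x) * C x y) t

/-- space-time norm `‖u‖_{p,p'}` over `[a,b] × B_r`. -/
def stnorm {d : ℕ} (p p' : ℝ) (a b r : ℝ) (u : ℝ → Zd d → ℝ) : ℝ :=
  ((b - a)⁻¹ * ∫ t in a..b, (pnorm p (zball d r) (u t)) ^ p') ^ (1 / p')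

/-- product of Lebesgue and counting measure on `ℝ × Zd d`. -/
def pcm (d : ℕ) : Measure (ℝ × Zd d) := (volume : Measure ℝ).prod Measure.count

lemma znorm_nonneg {d : ℕ} (x : Zd d) : 0 ≤ znorm x := Real.sqrt_nonneg _

lemma abs_le_znorm {d : ℕ} (x : Zd d) (i : Fin d) : |((x i : ℝ))| ≤ znorm x := by
  rw [← Real.sqrt_sq_eq_abs]
  exact Real.sqrt_le_sqrt (Finset.single_le_sum (fun j _ => sq_nonneg ((x j : ℝ)))
    (Finset.mem_univ i))

lemma one_le_znorm {d : ℕ} {x : Zd d} (hx : x ≠ 0) : 1 ≤ znorm x := by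
  obtain ⟨i, hi⟩ : ∃ i, x i ≠ 0 := by
    by_contra h; push_neg at h; exact hx (funext fun i => h i)
  refine le_trans ?_ (abs_le_znorm x i)
  have : (1 : ℤ) ≤ |x i| := Int.one_le_abs (by simpa using hi)
  calc (1:ℝ) ≤ (|x i| : ℝ) := by exact_mod_cast this
    _ = |((x i : ℝ))| := by push_cast [Int.cast_abs]; ring
  
lemma summable_one_add_abs {β : ℝ} (hβ : 1 < β) :
    Summable fun k : ℤ => (1 + |(k : ℝ)|) ^ (-β) := by
  have hg : Summable fun k : ℤ => |(k : ℝ)| ^ (-β) + (if k = 0 then 1 else 0) := by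
    refine (Real.summable_abs_int_rpow hβ).add ?_
    exact summable_of_ne_finset_zero (s := {0}) (fun k hk => by
      simp [Finset.mem_singleton] at hk; simp [hk])
  refine Summable.of_nonneg_of_le (fun k => Real.rpow_nonneg (by positivity) _) (fun k => ?_) hg
  by_cases hk : k = 0
  · subst hk; simp [Real.zero_rpow (by linarith : -β ≠ 0)]
  · have h0 : (0:ℝ) < |(k:ℝ)| := by
      simp only [abs_pos]; exact_mod_cast hk
    have : (1 + |(k:ℝ)|) ^ (-β) ≤ |(k:ℝ)| ^ (-β) :=
      Real.rpow_le_rpow_of_nonpos h0 (by linarith) (by linarith)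
    refine this.trans ?_
    simp [hk]

lemma tsum_pi_prod (h : ℤ → ℝ≥0∞) :
    ∀ d : ℕ, ∑' z : Zd d, ∏ i, h (z i) = (∑' k : ℤ, h k) ^ d := by
  intro d
  induction d with
  | zero =>
    simp only [Finset.univ_eq_empty, Finset.prod_empty, pow_zero]
    exact tsum_eq_single 0 (fun b hb => absurd (Subsingleton.elim b 0) hb)
  | succ n ih =>
    rw [← (Fin.consEquiv (fun _ : Fin (n+1) => ℤ)).tsum_eq, ENNReal.tsum_prod']
    simp only [Fin.consEquiv_apply]
    have h1 : ∀ (a : ℤ) (z : Zd n), (∏ i, h ((Fin.cons a z : Zd (n+1)) i)) = h a * ∏ i, h (z i) := by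
      intro a z
      rw [Fin.prod_univ_succ]; simp
    calc ∑' (a : ℤ) (z : Zd n), ∏ i, h ((Fin.cons a z : Zd (n+1)) i)
        = ∑' (a : ℤ), h a * ∑' (z : Zd n), ∏ i, h (z i) := by
          refine tsum_congr fun a => ?_
          rw [← ENNReal.tsum_mul_left]
          exact tsum_congr fun z => h1 a z
      _ = (∑' k : ℤ, h k) ^ (n+1) := by
          rw [ENNReal.tsum_mul_right, ih, pow_succ]; ring

lemma lattice_lt_top (d : ℕ) (hd : 1 ≤ d) {α : ℝ} (hα : (d:ℝ) < α) :
    ∑' z : {z : Zd d // z ≠ 0}, ENNReal.ofReal (znorm (z : Zd d) ^ (-α)) < ∞ := by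
  have hd0 : (0:ℝ) < d := by exact_mod_cast hd
  have hα0 : 0 < α := lt_trans hd0 hα
  set β := α / d with hβdef
  have hβ : 1 < β := (one_lt_div hd0).2 hα
  have hβ0 : 0 < β := lt_trans one_pos hβ
  -- pointwise bound
  have key : ∀ z : Zd d, z ≠ 0 →
      znorm z ^ (-α) ≤ 2 ^ α * ∏ i, (1 + |((z i : ℝ))|) ^ (-β) := by
    intro z hz
    set N := znorm z with hNdef
    have hN : 1 ≤ N := one_le_znorm hz
    have hN0 : 0 < N := lt_of_lt_of_le one_pos hN
    have hpos : ∀ i : Fin d, (0:ℝ) < 1 + |((z i : ℝ))| := fun i => by positivity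
    have hprodpos : 0 < ∏ i, (1 + |((z i : ℝ))|) :=
      Finset.prod_pos fun i _ => hpos i
    have h1 : ∏ i, (1 + |((z i : ℝ))|) ≤ (2 * N) ^ (d:ℕ) := by
      calc ∏ i, (1 + |((z i : ℝ))|) ≤ ∏ _i : Fin d, (2 * N) := by
            refine Finset.prod_le_prod (fun i _ => le_of_lt (hpos i)) (fun i _ => ?_)
            have := abs_le_znorm z i
            linarith
        _ = (2 * N) ^ (d:ℕ) := by
            rw [Finset.prod_const, Finset.card_univ, Fintype.card_fin]
    have h2 : (∏ i, (1 + |((z i : ℝ))|)) ^ β ≤ (2 * N) ^ α := by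
      calc (∏ i, (1 + |((z i : ℝ))|)) ^ β ≤ ((2 * N) ^ (d:ℕ)) ^ β :=
            Real.rpow_le_rpow (le_of_lt hprodpos) h1 (le_of_lt hβ0)
        _ = (2 * N) ^ α := by
            rw [← Real.rpow_natCast (2 * N) d, ← Real.rpow_mul (by positivity)]
            congr 1
            rw [hβdef]; field_simp
    have h4 : (2 * N) ^ (-α) ≤ (∏ i, (1 + |((z i : ℝ))|)) ^ (-β) := by
      rw [Real.rpow_neg (by positivity), Real.rpow_neg (le_of_lt hprodpos)]
      exact inv_anti₀ (Real.rpow_pos_of_pos hprodpos β) h2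
    have h5 : (2 * N) ^ (-α) = 2 ^ (-α) * N ^ (-α) :=
      Real.mul_rpow (by norm_num) (le_of_lt hN0)
    have h6 : N ^ (-α) = 2 ^ α * (2 * N) ^ (-α) := by
      rw [h5, ← mul_assoc, ← Real.rpow_add two_pos]
      simp
    rw [h6, Real.finset_prod_rpow _ _ (fun i _ => le_of_lt (hpos i)) (-β)]
    exact mul_le_mul_of_nonneg_left h4 (le_of_lt (Real.rpow_pos_of_pos two_pos α))
  set h : ℤ → ℝ≥0∞ := fun k => ENNReal.ofReal ((1 + |(k : ℝ)|) ^ (-β)) with hdef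
  have hsum : ∑' k : ℤ, h k < ∞ := by
    rw [hdef, ← ENNReal.ofReal_tsum_of_nonneg (fun k => Real.rpow_nonneg (by positivity) _)
      (summable_one_add_abs hβ)]
    exact ENNReal.ofReal_lt_top
  calc ∑' z : {z : Zd d // z ≠ 0}, ENNReal.ofReal (znorm (z : Zd d) ^ (-α))
      ≤ ∑' z : {z : Zd d // z ≠ 0}, ENNReal.ofReal (2 ^ α) * ∏ i, h ((z : Zd d) i) := by
        refine Summable.tsum_le_tsum (fun z => ?_) ENNReal.summable ENNReal.summable
        rw [hdef, ← ENNReal.ofReal_prod_of_nonneg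
          (fun i _ => Real.rpow_nonneg (by positivity) _),
          ← ENNReal.ofReal_mul (le_of_lt (Real.rpow_pos_of_pos two_pos α))]
        exact ENNReal.ofReal_le_ofReal (key z z.2)
    _ = ENNReal.ofReal (2 ^ α) * ∑' z : {z : Zd d // z ≠ 0}, ∏ i, h ((z : Zd d) i) := by
        rw [ENNReal.tsum_mul_left]
    _ ≤ ENNReal.ofReal (2 ^ α) * ∑' z : Zd d, ∏ i, h (z i) := by
        refine mul_le_mul_right ?_ _
        exact ENNReal.tsum_comp_le_tsum_of_injective
          (Subtype.val_injective (p := fun z : Zd d => z ≠ 0)) (fun z => ∏ i, h (z i))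
    _ = ENNReal.ofReal (2 ^ α) * (∑' k : ℤ, h k) ^ d := by rw [tsum_pi_prod]
    _ < ∞ := ENNReal.mul_lt_top ENNReal.ofReal_lt_top (ENNReal.pow_lt_top hsum)

lemma enn_add_rpow_le (a b : ℝ≥0∞) {r : ℝ} (hr : 0 ≤ r) :
    (a + b) ^ r ≤ 2 ^ r * (a ^ r + b ^ r) := by
  have h1 : a + b ≤ 2 * max a b := by
    rcases le_total a b with h|h
    · calc a + b ≤ b + b := add_le_add_left h b
        _ = 2 * b := (two_mul b).symm
        _ ≤ 2 * max a b := mul_le_mul_right (le_max_right a b) 2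
    · calc a + b ≤ a + a := add_le_add_right h a
        _ = 2 * a := (two_mul a).symm
        _ ≤ 2 * max a b := mul_le_mul_right (le_max_left a b) 2
  calc (a + b) ^ r ≤ (2 * max a b) ^ r := ENNReal.rpow_le_rpow h1 hr
    _ = 2 ^ r * (max a b) ^ r := ENNReal.mul_rpow_of_nonneg _ _ hr
    _ ≤ 2 ^ r * (a ^ r + b ^ r) := by
        refine mul_le_mul_right ?_ _
        rcases le_total a b with h|h
        · rw [max_eq_right h]; exact le_add_self
        · rw [max_eq_left h]; exact le_self_add

lemma enn_mul_rpow_self (x : ℝ≥0∞) {q : ℝ} (hq : 1 < q) : x * x ^ (q - 1) = x ^ q := by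
  have hq1 : (0:ℝ) < q - 1 := by linarith
  rcases eq_or_ne x 0 with rfl | hx0
  · rw [ENNReal.zero_rpow_of_pos hq1, ENNReal.zero_rpow_of_pos (by linarith), mul_zero]
  rcases eq_or_ne x ∞ with rfl | hxt
  · rw [ENNReal.top_rpow_of_pos hq1, ENNReal.top_rpow_of_pos (by linarith), ENNReal.top_mul_top]
  · nth_rewrite 1 [← ENNReal.rpow_one x]
    rw [← ENNReal.rpow_add 1 (q-1) hx0 hxt]
    congr 1
    ring

lemma enn_rpow_le_one_add (x : ℝ≥0∞) {q : ℝ} (h0 : 0 ≤ q) (h1 : q ≤ 1) : x ^ q ≤ 1 + x := by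
  rcases le_total x 1 with h|h
  · calc x ^ q ≤ 1 ^ q := ENNReal.rpow_le_rpow h h0
      _ = 1 := ENNReal.one_rpow q
      _ ≤ 1 + x := le_self_add
  · calc x ^ q ≤ x ^ (1:ℝ) := ENNReal.rpow_le_rpow_of_exponent_le h h1
      _ = x := ENNReal.rpow_one x
      _ ≤ 1 + x := le_add_self

open ProbabilityTheory in
lemma rosenthal_rec {ι : Type} [Countable ι] {Ω : Type} [MeasurableSpace Ω]
    (P : Measure Ω) [IsProbabilityMeasure P] {p : ℝ} (hp : 1 ≤ p)
    (X : ι → Ω → ℝ≥0∞) (hXmeas : ∀ i, Measurable (X i))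
    (hindep : ∀ i : ι, IndepFun (X i) (fun ω => ∑' j, if j = i then (0:ℝ≥0∞) else X j ω) P)
    (hAfin : ∀ q : ℝ, 0 < q → q ≤ p → ∑' i, ∫⁻ ω, X i ω ^ q ∂P < ∞) :
    ∀ n : ℕ, ∀ q : ℝ, 0 < q → q ≤ p → q ≤ n →
      ∫⁻ ω, (∑' i, X i ω) ^ q ∂P < ∞ := by
  set S : Ω → ℝ≥0∞ := fun ω => ∑' i, X i ω with hSdef
  have hSmeas : Measurable S := Measurable.ennreal_tsum hXmeas
  have hE1 : ∀ i, ∫⁻ ω, X i ω ∂P = ∫⁻ ω, X i ω ^ (1:ℝ) ∂P :=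
    fun i => lintegral_congr fun ω => (ENNReal.rpow_one _).symm
  have hES : ∫⁻ ω, S ω ∂P < ∞ := by
    rw [hSdef]
    simp only
    rw [lintegral_tsum (fun i => (hXmeas i).aemeasurable)]
    calc ∑' i, ∫⁻ ω, X i ω ∂P = ∑' i, ∫⁻ ω, X i ω ^ (1:ℝ) ∂P := tsum_congr hE1
      _ < ∞ := hAfin 1 one_pos hp
  intro n
  induction n with
  | zero => intro q hq0 _ hqn; exact absurd (lt_of_lt_of_le hq0 hqn) (by norm_num)
  | succ n ih =>
    intro q hq0 hqp hqn
    by_cases hq1 : q ≤ 1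
    · calc ∫⁻ ω, S ω ^ q ∂P ≤ ∫⁻ ω, (1 + S ω) ∂P :=
            lintegral_mono fun ω => enn_rpow_le_one_add _ hq0.le hq1
        _ = 1 + ∫⁻ ω, S ω ∂P := by
            rw [lintegral_add_left measurable_const, lintegral_const, measure_univ, mul_one]
        _ < ∞ := ENNReal.add_lt_top.2 ⟨ENNReal.one_lt_top, hES⟩
    · push_neg at hq1
      have hq1' : (0:ℝ) < q - 1 := by linarith
      have IH : ∫⁻ ω, S ω ^ (q - 1) ∂P < ∞ := by
        refine ih (q - 1) hq1' (by linarith) ?_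
        have : q ≤ (n:ℝ) + 1 := by exact_mod_cast hqn
        linarith
      set T : ι → Ω → ℝ≥0∞ := fun i ω => ∑' j, if j = i then (0:ℝ≥0∞) else X j ω with hTdef
      have hTmeas : ∀ i, Measurable (T i) := by
        intro i
        refine Measurable.ennreal_tsum fun j => ?_
        by_cases h : j = i
        · simp [h]
        · simp only [h, if_false]; exact hXmeas j
      have hsplit : ∀ i ω, S ω = X i ω + T i ω := fun i ω => ENNReal.tsum_eq_add_tsum_ite i
      have hTleS : ∀ i ω, T i ω ≤ S ω := by
        intro i ω
        refine Summable.tsum_le_tsum (fun j => ?_) ENNReal.summable ENNReal.summable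
        by_cases h : j = i
        · simp [h]
        · simp [h]
      have key : ∀ i, ∫⁻ ω, X i ω * S ω ^ (q-1) ∂P ≤
          2 ^ (q-1) * (∫⁻ ω, X i ω ^ q ∂P +
            (∫⁻ ω, X i ω ^ (1:ℝ) ∂P) * ∫⁻ ω, S ω ^ (q-1) ∂P) := by
        intro i
        have step1 : ∀ ω, X i ω * S ω ^ (q-1) ≤
            2 ^ (q-1) * (X i ω ^ q + X i ω * T i ω ^ (q-1)) := by
          intro ω
          calc X i ω * S ω ^ (q-1) = X i ω * (X i ω + T i ω) ^ (q-1) := by rw [← hsplit i ω]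
            _ ≤ X i ω * (2 ^ (q-1) * (X i ω ^ (q-1) + T i ω ^ (q-1))) :=
                mul_le_mul_right (enn_add_rpow_le _ _ hq1'.le) _
            _ = 2 ^ (q-1) * (X i ω * X i ω ^ (q-1) + X i ω * T i ω ^ (q-1)) := by ring
            _ = 2 ^ (q-1) * (X i ω ^ q + X i ω * T i ω ^ (q-1)) := by
                rw [enn_mul_rpow_self _ hq1]
        have hmeasXq : Measurable fun ω => X i ω ^ q := (hXmeas i).pow_const q
        have hmeasXT : Measurable fun ω => X i ω * T i ω ^ (q-1) :=
          (hXmeas i).mul ((hTmeas i).pow_const (q-1))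
        calc ∫⁻ ω, X i ω * S ω ^ (q-1) ∂P
            ≤ ∫⁻ ω, 2 ^ (q-1) * (X i ω ^ q + X i ω * T i ω ^ (q-1)) ∂P := lintegral_mono step1
          _ = 2 ^ (q-1) * (∫⁻ ω, X i ω ^ q ∂P + ∫⁻ ω, X i ω * T i ω ^ (q-1) ∂P) := by
              rw [lintegral_const_mul (f := fun ω => X i ω ^ q + X i ω * T i ω ^ (q-1)) _ (hmeasXq.add hmeasXT), lintegral_add_left hmeasXq]
          _ = 2 ^ (q-1) * (∫⁻ ω, X i ω ^ q ∂P +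
                (∫⁻ ω, X i ω ∂P) * ∫⁻ ω, T i ω ^ (q-1) ∂P) := by
              rw [lintegral_mul_eq_lintegral_mul_lintegral_of_indepFun''
                (hXmeas i).aemeasurable ((hTmeas i).pow_const (q-1)).aemeasurable
                ((hindep i).comp measurable_id (measurable_id.pow_const (q-1)))]
          _ ≤ 2 ^ (q-1) * (∫⁻ ω, X i ω ^ q ∂P +
                (∫⁻ ω, X i ω ^ (1:ℝ) ∂P) * ∫⁻ ω, S ω ^ (q-1) ∂P) := by
              refine mul_le_mul_right (add_le_add_right (mul_le_mul' ?_ ?_) _) _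
              · exact le_of_eq (hE1 i)
              · exact lintegral_mono fun ω =>
                  ENNReal.rpow_le_rpow (hTleS i ω) hq1'.le
      calc ∫⁻ ω, S ω ^ q ∂P
          = ∫⁻ ω, ∑' i, X i ω * S ω ^ (q-1) ∂P := by
            refine lintegral_congr fun ω => ?_
            rw [ENNReal.tsum_mul_right, ← enn_mul_rpow_self (S ω) hq1]
        _ = ∑' i, ∫⁻ ω, X i ω * S ω ^ (q-1) ∂P :=
            lintegral_tsum fun i =>
              ((hXmeas i).mul (hSmeas.pow_const (q-1))).aemeasurable
        _ ≤ ∑' i, 2 ^ (q-1) * (∫⁻ ω, X i ω ^ q ∂P +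
              (∫⁻ ω, X i ω ^ (1:ℝ) ∂P) * ∫⁻ ω, S ω ^ (q-1) ∂P) :=
            Summable.tsum_le_tsum key ENNReal.summable ENNReal.summable
        _ = 2 ^ (q-1) * ((∑' i, ∫⁻ ω, X i ω ^ q ∂P) +
              (∑' i, ∫⁻ ω, X i ω ^ (1:ℝ) ∂P) * ∫⁻ ω, S ω ^ (q-1) ∂P) := by
            rw [ENNReal.tsum_mul_left, ENNReal.tsum_add, ENNReal.tsum_mul_right]
        _ < ∞ := by
            refine ENNReal.mul_lt_top ?_ (ENNReal.add_lt_top.2 ⟨hAfin q hq0 hqp, ?_⟩)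
            · exact ENNReal.rpow_lt_top_of_nonneg hq1'.le (by norm_num)
            · exact ENNReal.mul_lt_top (hAfin 1 one_pos hp) IH

/-- Moment bound for long-range percolation conductances (Example 1.5(i)). -/
theorem statement18 (d : ℕ) (hd : 1 ≤ d) (s pexp : ℝ) (hs : 0 < s) (hp : 1 ≤ pexp)
    (hsp : 2 * pexp < s)
    (Ω : Type) [MeasurableSpace Ω] (P : MeasureTheory.Measure Ω)
    [MeasureTheory.IsProbabilityMeasure P]
    (ξ : {z : Zd d // z ≠ 0} → Ω → ℝ)
    (hmeas : ∀ z, Measurable (ξ z))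
    (h01 : ∀ z ω, ξ z ω = 0 ∨ ξ z ω = 1)
    (hind : ProbabilityTheory.iIndepFun ξ P)
    (hdist1 : ∀ z : {z : Zd d // z ≠ 0},
      P {ω | ξ z ω = 1} = ENNReal.ofReal (znorm (z : Zd d) ^ (-((d : ℝ) + s))))
    (hdist0 : ∀ z : {z : Zd d // z ≠ 0},
      P {ω | ξ z ω = 0} = 1 - ENNReal.ofReal (znorm (z : Zd d) ^ (-((d : ℝ) + s)))) :
    (∫⁻ ω, (∑' z : {z : Zd d // z ≠ 0},
        ENNReal.ofReal (znorm (z : Zd d) ^ 2 * ξ z ω)) ^ pexp ∂P) < ∞ := by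
  have hznorm1 : ∀ z : {z : Zd d // z ≠ 0}, 1 ≤ znorm (z : Zd d) :=
    fun z => one_le_znorm z.2
  have hznorm0 : ∀ z : {z : Zd d // z ≠ 0}, 0 < znorm (z : Zd d) :=
    fun z => lt_of_lt_of_le one_pos (hznorm1 z)
  have hXmeas : ∀ z : {z : Zd d // z ≠ 0},
      Measurable (fun ω => ENNReal.ofReal (znorm (z : Zd d) ^ 2 * ξ z ω)) := fun z =>
    (Measurable.const_mul (hmeas z) _).ennreal_ofReal
  -- independence
  have hindep : ∀ i : {z : Zd d // z ≠ 0}, ProbabilityTheory.IndepFun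
      (fun ω => ENNReal.ofReal (znorm (i : Zd d) ^ 2 * ξ i ω))
      (fun ω => ∑' j : {z : Zd d // z ≠ 0}, @ite ℝ≥0∞ (j = i) (Classical.propDecidable _) 0
        (ENNReal.ofReal (znorm (j : Zd d) ^ 2 * ξ j ω))) P := by
    intro i
    set sa : {z : Zd d // z ≠ 0} → MeasurableSpace Ω :=
      fun j => MeasurableSpace.comap (ξ j) inferInstance with hsadef
    have h_le : ∀ j, sa j ≤ (inferInstance : MeasurableSpace Ω) := fun j => (hmeas j).comap_le
    have hI := ProbabilityTheory.indep_biSup_compl h_le hind ({i} : Set {z : Zd d // z ≠ 0})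
    have h1 : (⨆ j ∈ ({i} : Set {z : Zd d // z ≠ 0}), sa j) = sa i := by simp
    rw [h1] at hI
    have hφ : Measurable fun r : ℝ => ENNReal.ofReal (znorm (i : Zd d) ^ 2 * r) :=
      (measurable_const_mul _).ennreal_ofReal
    have hX : MeasurableSpace.comap (fun ω => ENNReal.ofReal (znorm (i : Zd d) ^ 2 * ξ i ω))
        inferInstance ≤ sa i := by
      have heq : (fun ω => ENNReal.ofReal (znorm (i : Zd d) ^ 2 * ξ i ω)) =
          (fun r : ℝ => ENNReal.ofReal (znorm (i : Zd d) ^ 2 * r)) ∘ ξ i := rfl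
      rw [heq, ← MeasurableSpace.comap_comp]
      exact MeasurableSpace.comap_mono hφ.comap_le
    have hT : MeasurableSpace.comap
        (fun ω => ∑' j : {z : Zd d // z ≠ 0}, @ite ℝ≥0∞ (j = i) (Classical.propDecidable _) 0
          (ENNReal.ofReal (znorm (j : Zd d) ^ 2 * ξ j ω)))
        inferInstance ≤ ⨆ j ∈ ({i}ᶜ : Set {z : Zd d // z ≠ 0}), sa j := by
      rw [← measurable_iff_comap_le]
      refine Measurable.ennreal_tsum fun j => ?_
      by_cases h : j = i
      · simp only [h, if_pos]; exact measurable_const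
      · simp only [h, if_neg, not_false_iff]
        have hξj : @Measurable Ω ℝ (sa j) _ (ξ j) := Measurable.of_comap_le le_rfl
        have hsaj : sa j ≤ ⨆ j ∈ ({i}ᶜ : Set {z : Zd d // z ≠ 0}), sa j :=
          le_iSup₂ (f := fun (j : {z : Zd d // z ≠ 0})
            (_ : j ∈ ({i}ᶜ : Set {z : Zd d // z ≠ 0})) => sa j) j h
        have hφj : Measurable fun r : ℝ => ENNReal.ofReal (znorm (j : Zd d) ^ 2 * r) :=
          (measurable_const_mul _).ennreal_ofReal
        exact hφj.comp (hξj.mono hsaj le_rfl)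
    exact ProbabilityTheory.indep_of_indep_of_le_left
      (ProbabilityTheory.indep_of_indep_of_le_right hI hT) hX
  -- moments
  have hAfin : ∀ q : ℝ, 0 < q → q ≤ pexp →
      ∑' z : {z : Zd d // z ≠ 0},
        ∫⁻ ω, (ENNReal.ofReal (znorm (z : Zd d) ^ 2 * ξ z ω)) ^ q ∂P < ∞ := by
    intro q hq0 hqp
    have hset : ∀ z : {z : Zd d // z ≠ 0}, MeasurableSet {ω | ξ z ω = 1} := fun z =>
      (hmeas z) (measurableSet_singleton 1)
    have hXq : ∀ (z : {z : Zd d // z ≠ 0}) ω,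
        (ENNReal.ofReal (znorm (z : Zd d) ^ 2 * ξ z ω)) ^ q =
        ({ω | ξ z ω = 1}).indicator
          (fun _ => ENNReal.ofReal (znorm (z : Zd d) ^ 2) ^ q) ω := by
      intro z ω
      rcases h01 z ω with h | h
      · have hnot : ω ∉ {ω | ξ z ω = 1} := by
          simp only [Set.mem_setOf_eq, h]; norm_num
        rw [Set.indicator_of_notMem hnot, h, mul_zero, ENNReal.ofReal_zero]
        exact ENNReal.zero_rpow_of_pos hq0
      · have hmem : ω ∈ {ω | ξ z ω = 1} := h
        rw [Set.indicator_of_mem hmem, h, mul_one]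
    have hmom : ∀ z : {z : Zd d // z ≠ 0},
        ∫⁻ ω, (ENNReal.ofReal (znorm (z : Zd d) ^ 2 * ξ z ω)) ^ q ∂P =
        ENNReal.ofReal (znorm (z : Zd d) ^ (-(((d:ℝ) + s) - 2*q))) := by
      intro z
      rw [lintegral_congr (hXq z), lintegral_indicator_const (hset z), hdist1 z]
      have hreal : ((znorm (z : Zd d) ^ 2 : ℝ)) ^ q = znorm (z : Zd d) ^ (2*q) := by
        rw [show (znorm (z : Zd d) ^ 2 : ℝ) = znorm (z : Zd d) ^ ((2:ℕ):ℝ) from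
          (Real.rpow_natCast _ 2).symm, ← Real.rpow_mul (znorm_nonneg _)]
        norm_num
      have h2q : (ENNReal.ofReal (znorm (z : Zd d) ^ 2)) ^ q =
          ENNReal.ofReal (znorm (z : Zd d) ^ (2*q)) := by
        rw [ENNReal.ofReal_rpow_of_nonneg (by positivity) hq0.le, hreal]
      rw [h2q, ← ENNReal.ofReal_mul (Real.rpow_nonneg (znorm_nonneg _) _),
        ← Real.rpow_add (hznorm0 z),
        show (2*q + -((d:ℝ)+s)) = -(((d:ℝ)+s) - 2*q) by ring]
    simp only [hmom]
    exact lattice_lt_top d hd (by linarith)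
  exact rosenthal_rec P hp
    (fun (z : {z : Zd d // z ≠ 0}) ω => ENNReal.ofReal (znorm (z : Zd d) ^ 2 * ξ z ω))
    hXmeas hindep hAfin ⌈pexp⌉₊ pexp (by linarith) le_rfl (Nat.le_ceil pexp)

end
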